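/- arXiv:2003.13123 — 10 statements merged into one kernel-verified Lean document; each statement's English description precedes it below -/
import Mathlib

section
/- If a game u on player set V is graphical on a directed graph E₁ and also graphical on a directed graph E₂ (both on the same vertex set V), then u is graphical on the intersection graph E₁ ∩ E₂ (the graph whose edge set is the intersection of the two edge sets). -/
/-- A game `u` (players `V`, action sets `A i`, utilities `u i`) is *graphical* on the
directed graph with edge relation `E` if each player's utility depends only on her own
action and the actions of her out-neighbours. -/
def Graphical {V : Type*} (A : V → Type*) (u : ∀ i : V, (∀ j, A j) → ℝ)
    (E : V → V → Prop) : Prop :=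
  ∀ i : V, ∀ x y : ∀ j, A j, x i = y i → (∀ j, E i j → x j = y j) → u i x = u i y

/-- If a game is graphical on `E₁` and on `E₂`, then it is graphical on their
intersection. -/
theorem graphical_inter {V : Type*} [Fintype V] {A : V → Type*}
    [∀ i, Fintype (A i)] [∀ i, Nonempty (A i)]
    (u : ∀ i : V, (∀ j, A j) → ℝ) (E₁ E₂ : V → V → Prop)
    (hirr₁ : ∀ i, ¬ E₁ i i) (hirr₂ : ∀ i, ¬ E₂ i i)
    (h₁ : Graphical A u E₁) (h₂ : Graphical A u E₂) :
    Graphical A u (fun i j => E₁ i j ∧ E₂ i j) := by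
  classical
  intro i x y hxy h
  set z : ∀ j, A j := fun j => if E₁ i j then x j else y j with hz
  have hx : u i x = u i z := by
    apply h₁ i x z
    · simp [hz, hirr₁ i, hxy]
    · intro j hj; simp [hz, hj]
  have hy : u i z = u i y := by
    apply h₂ i z y
    · simp [hz, hirr₁ i]
    · intro j hj
      by_cases hj1 : E₁ i j
      · simpa [hz, hj1] using h j ⟨hj1, hj⟩
      · simp [hz, hj1]
  rw [hx, hy]
end

section
/- If v is a normalized game that is strategically equivalent to a game u, then v equals the normalized version ū of u, defined by ū_i(x) = u_i(x) − (1/|A_i|) · Σ_{a ∈ A_i} u_i(a, x_{-i}). In particular, ū is the unique normalized game in the strategic-equivalence class of u. -/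
/-- A game is *non-strategic* if each player's utility does not depend on her own action. -/
def NonStrategic {V : Type*} (A : V → Type*) (u : ∀ i : V, (∀ j, A j) → ℝ) : Prop :=
  ∀ i : V, ∀ x y : ∀ j, A j, (∀ j, j ≠ i → x j = y j) → u i x = u i y

/-- A game is *normalized* if for every player `i` and profile `x`, the sum of her
utilities over all her possible actions (others' actions fixed) vanishes. -/
def Normalized {V : Type*} [DecidableEq V] (A : V → Type*) [∀ i, Fintype (A i)]
    (u : ∀ i : V, (∀ j, A j) → ℝ) : Prop :=
  ∀ i : V, ∀ x : ∀ j, A j, ∑ a : A i, u i (Function.update x i a) = 0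

/-- The *normalized version* `ū` of a game `u`:
`ū_i(x) = u_i(x) − (1/|A_i|) · Σ_{a ∈ A_i} u_i(a, x_{-i})`. -/
noncomputable def normalizeGame {V : Type*} [DecidableEq V] (A : V → Type*)
    [∀ i, Fintype (A i)] (u : ∀ i : V, (∀ j, A j) → ℝ) :
    ∀ i : V, (∀ j, A j) → ℝ :=
  fun i x => u i x -
    (1 / (Fintype.card (A i) : ℝ)) * ∑ a : A i, u i (Function.update x i a)

/-!
On the fibre `a ↦ (a, x₋ᵢ)` of player `i`, the difference `u_i − v_i` of strategically
equivalent games is constant, while `v_i` sums to zero. Summing over the fibre therefore gives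
`|A_i| · (u_i(x) − v_i(x)) = Σ_a u_i(a, x₋ᵢ)`, i.e. `u_i(x) − v_i(x)` is the correction term of `ū`.
-/

open Function

section

variable {V : Type*} [DecidableEq V] {A : V → Type*}

theorem NonStrategic.apply_update {w : ∀ i : V, (∀ j, A j) → ℝ} (hw : NonStrategic A w)
    (i : V) (x : ∀ j, A j) (a : A i) : w i (update x i a) = w i x :=
  hw i _ x fun _ hj => update_of_ne hj _ _

theorem NonStrategic.sum_update [∀ i, Fintype (A i)] {w : ∀ i : V, (∀ j, A j) → ℝ}
    (hw : NonStrategic A w) (i : V) (x : ∀ j, A j) :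
    ∑ a : A i, w i (update x i a) = Fintype.card (A i) * w i x := by
  simp [hw.apply_update]

theorem Normalized.sum_update_eq_card_mul_sub [∀ i, Fintype (A i)]
    {u v : ∀ i : V, (∀ j, A j) → ℝ} (hv : Normalized A v)
    (hequiv : NonStrategic A (fun i x => u i x - v i x)) (i : V) (x : ∀ j, A j) :
    ∑ a : A i, u i (update x i a) = Fintype.card (A i) * (u i x - v i x) := by
  simpa only [Finset.sum_sub_distrib, hv i x, sub_zero] using hequiv.sum_update i x

end

theorem normalized_equivalent_unique_general {V : Type*} [DecidableEq V]
    {A : V → Type*} [∀ i, Fintype (A i)] [∀ i, Nonempty (A i)]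
    (u v : ∀ i : V, (∀ j, A j) → ℝ)
    (hv : Normalized A v)
    (hequiv : NonStrategic A (fun i x => u i x - v i x)) :
    v = normalizeGame A u := by
  funext i x
  have hcard : (Fintype.card (A i) : ℝ) ≠ 0 := Nat.cast_ne_zero.mpr Fintype.card_ne_zero
  rw [normalizeGame, hv.sum_update_eq_card_mul_sub hequiv, one_div, inv_mul_cancel_left₀ hcard]
  ring

/-- The normalized version of `u` is the unique normalized game strategically
equivalent to `u`: any normalized game `v` strategically equivalent to `u` equals `ū`. -/
theorem normalized_equivalent_unique {V : Type*} [Fintype V] [DecidableEq V]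
    {A : V → Type*} [∀ i, Fintype (A i)] [∀ i, Nonempty (A i)]
    (u v : ∀ i : V, (∀ j, A j) → ℝ)
    (hv : Normalized A v)
    (hequiv : NonStrategic A (fun i x => u i x - v i x)) :
    v = normalizeGame A u :=
  normalized_equivalent_unique_general u v hv hequiv
end

section
/- (Corollary 1) Let u be a game with normalized version ū, defined by ū_i(x) = u_i(x) − (1/|A_i|) · Σ_{a ∈ A_i} u_i(a, x_{-i}). If ũ is any game strategically equivalent to u and ũ is graphical on a directed graph E, then ū is graphical on E. Consequently the minimal graph of ū is contained in the minimal graph of every game strategically equivalent to u. -/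
/-- The minimal graph of a game `u`: `(i,j)` is a link iff `i ≠ j` and
player `i`'s utility actually depends on player `j`'s action. -/
def minGraph {V : Type*} (A : V → Type*) (u : ∀ i : V, (∀ j, A j) → ℝ) :
    V → V → Prop :=
  fun i j => i ≠ j ∧ ∃ x y : ∀ k, A k, (∀ k, k ≠ j → x k = y k) ∧ u i x ≠ u i y

/-- Corollary 1: if `ũ` is strategically equivalent to `u` and graphical on `E`,
then the normalized version `ū` of `u` is graphical on `E`; consequently the minimal
graph of `ū` is contained in the minimal graph of every game strategically
equivalent to `u`. -/
theorem normalizeGame_minimal {V : Type*} [Fintype V] [DecidableEq V]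
    {A : V → Type*} [∀ i, Fintype (A i)] [∀ i, Nonempty (A i)]
    (u utilde : ∀ i : V, (∀ j, A j) → ℝ) (E : V → V → Prop)
    (hirr : ∀ i, ¬ E i i)
    (hequiv : NonStrategic A (fun i x => u i x - utilde i x))
    (hg : Graphical A utilde E) :
    Graphical A (normalizeGame A u) E ∧
      ∀ i j, minGraph A (normalizeGame A u) i j → minGraph A utilde i j := by

  classical
  -- The normalized versions of `u` and `utilde` coincide.
  have hcard : ∀ i : V, (Fintype.card (A i) : ℝ) ≠ 0 := by
    intro i
    exact_mod_cast (Fintype.card_pos (α := A i)).ne'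
  have key : normalizeGame A u = normalizeGame A utilde := by
    funext i x
    have hterm : ∀ a : A i,
        u i (Function.update x i a) - utilde i (Function.update x i a)
          = u i x - utilde i x := by
      intro a
      exact hequiv i _ x (fun j hj => Function.update_of_ne hj _ _)
    have hsum : ∑ a : A i, u i (Function.update x i a)
        = ∑ a : A i, utilde i (Function.update x i a)
          + (Fintype.card (A i) : ℝ) * (u i x - utilde i x) := by
      have : ∑ a : A i, (u i (Function.update x i a)
          - utilde i (Function.update x i a))
          = ∑ a : A i, (u i x - utilde i x) := by
        exact Finset.sum_congr rfl fun a _ => hterm a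
      rw [Finset.sum_sub_distrib, Finset.sum_const, Finset.card_univ,
        nsmul_eq_mul] at this
      linarith [this]
    simp only [normalizeGame, hsum]
    field_simp
    ring
  rw [key]
  constructor
  · intro i x y hxy hN
    simp only [normalizeGame]
    have h1 : utilde i x = utilde i y := hg i x y hxy hN
    have h2 : ∀ a : A i, utilde i (Function.update x i a)
        = utilde i (Function.update y i a) := by
      intro a
      refine hg i _ _ (by simp) fun j hj => ?_
      have hji : j ≠ i := fun h => hirr i (h ▸ hj)
      rw [Function.update_of_ne hji, Function.update_of_ne hji]
      exact hN j hj
    rw [h1, Finset.sum_congr rfl fun a _ => h2 a]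
  · intro i j hij
    obtain ⟨hne, x, y, hxy, hdep⟩ := hij
    refine ⟨hne, ?_⟩
    by_contra hcon
    push_neg at hcon
    have hut : ∀ x y : ∀ k, A k, (∀ k, k ≠ j → x k = y k) →
        utilde i x = utilde i y := by
      intro x y h
      by_contra hne'
      exact hne' (by
        rcases hcon x y h with h'
        exact h')
    apply hdep
    simp only [normalizeGame]
    have h1 : utilde i x = utilde i y := hut x y hxy
    have h2 : ∀ a : A i, utilde i (Function.update x i a)
        = utilde i (Function.update y i a) := by
      intro a
      refine hut _ _ fun k hk => ?_
      by_cases hki : k = i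
      · subst hki; simp
      · rw [Function.update_of_ne hki, Function.update_of_ne hki]
        exact hxy k hk
    rw [h1, Finset.sum_congr rfl fun a _ => h2 a]
end

section
/- A normalized game u is harmonic if and only if Σ_{i ∈ V} |A_i| · u_i(x) = 0 for every strategy profile x. -/
/-- A game is *harmonic* if `Σ_i Σ_{a ∈ A_i} (u_i(x) − u_i(a, x_{-i})) = 0` for all `x`. -/
def Harmonic {V : Type*} [Fintype V] [DecidableEq V] (A : V → Type*)
    [∀ i, Fintype (A i)] (u : ∀ i : V, (∀ j, A j) → ℝ) : Prop :=
  ∀ x : ∀ j, A j, ∑ i : V, ∑ a : A i, (u i x - u i (Function.update x i a)) = 0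

/-- A normalized game is harmonic iff `Σ_i |A_i| · u_i(x) = 0` for every profile `x`. -/
theorem normalized_harmonic_iff {V : Type*} [Fintype V] [DecidableEq V]
    {A : V → Type*} [∀ i, Fintype (A i)] [∀ i, Nonempty (A i)]
    (u : ∀ i : V, (∀ j, A j) → ℝ) (hn : Normalized A u) :
    Harmonic A u ↔ ∀ x : ∀ j, A j, ∑ i : V, (Fintype.card (A i) : ℝ) * u i x = 0 := by
  have key : ∀ x : ∀ j, A j,
      ∑ i : V, ∑ a : A i, (u i x - u i (Function.update x i a))
        = ∑ i : V, (Fintype.card (A i) : ℝ) * u i x := by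
    intro x
    refine Finset.sum_congr rfl fun i _ => ?_
    rw [Finset.sum_sub_distrib, hn i x, sub_zero, Finset.sum_const, Finset.card_univ,
      nsmul_eq_mul]
  constructor
  · intro h x; rw [← key x]; exact h x
  · intro h x; rw [key x]; exact h x
end

section
/- Suppose all players' action sets have the same finite cardinality a ≥ 1, i.e., |A_i| = a for every i ∈ V. Then a normalized game u is harmonic if and only if it is a zero-sum game, i.e., Σ_{i ∈ V} u_i(x) = 0 for every strategy profile x. -/
/-- If all players' action sets have the same cardinality `a ≥ 1`, then a normalized
game is harmonic iff it is a zero-sum game. -/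
theorem normalized_harmonic_iff_zeroSum {V : Type*} [Fintype V] [DecidableEq V]
    {A : V → Type*} [∀ i, Fintype (A i)] [∀ i, Nonempty (A i)]
    (a : ℕ) (ha : 1 ≤ a) (hcard : ∀ i, Fintype.card (A i) = a)
    (u : ∀ i : V, (∀ j, A j) → ℝ) (hn : Normalized A u) :
    Harmonic A u ↔ ∀ x : ∀ j, A j, ∑ i : V, u i x = 0 := by
  have key : ∀ x : ∀ j, A j,
      ∑ i : V, ∑ b : A i, (u i x - u i (Function.update x i b))
        = (a : ℝ) * ∑ i : V, u i x := by
    intro x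
    rw [Finset.mul_sum]
    refine Finset.sum_congr rfl fun i _ => ?_
    rw [Finset.sum_sub_distrib, hn i x, sub_zero, Finset.sum_const, Finset.card_univ,
      hcard i, nsmul_eq_mul]
  have hapos : (0 : ℝ) < a := by exact_mod_cast ha
  constructor
  · intro h x
    have := h x
    rw [key x] at this
    exact (mul_eq_zero.mp this).resolve_left (ne_of_gt hapos)
  · intro h x
    rw [key x, h x, mul_zero]
end

section
/- (Corollary 2) Let u be a potential game with potential function φ, and suppose the normalized version ū of u (defined by ū_i(x) = u_i(x) − (1/|A_i|) · Σ_{a ∈ A_i} u_i(a, x_{-i})) is graphical on a simple graph H on V (regarded as a symmetric irreflexive relation). Then φ decomposes as a sum of local potentials over the maximal cliques of H: there exists, for each maximal clique C of H, a function φ^C : (Π j, A j) → ℝ depending only on the coordinates in C, such that φ(x) = Σ_{C maximal clique of H} φ^C(x) for every strategy profile x. -/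
/-- A function of strategy profiles *depends only on* the coordinates in `C`. -/
def ProfileDependsOn {V : Type*} (A : V → Type*) (f : (∀ j, A j) → ℝ) (C : Set V) : Prop :=
  ∀ x y : ∀ j, A j, (∀ j ∈ C, x j = y j) → f x = f y

/-- `φ` is an (exact) *potential* for the game `u`. -/
def IsPotential {V : Type*} (A : V → Type*) (u : ∀ i : V, (∀ j, A j) → ℝ)
    (φ : (∀ j, A j) → ℝ) : Prop :=
  ∀ i : V, ∀ x y : ∀ j, A j, (∀ j, j ≠ i → x j = y j) → u i x - u i y = φ x - φ y

/-- `C` is a *maximal clique* of the simple graph `H`. -/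
def MaximalClique {V : Type*} (H : SimpleGraph V) (C : Finset V) : Prop :=
  H.IsClique (C : Set V) ∧ ∀ D : Finset V, H.IsClique (D : Set V) → C ⊆ D → D = C

/-!
Fix a base profile `z`. Möbius inversion on the Boolean lattice of subsets of `V` writes
`φ = ∑_S φ_S`, where `φ_S x = ∑_{T ⊆ S} (-1)^{|S \ T|} φ(x on T, z off T)` depends only on `x_S`.
Since `φ` and `ū_i` change by the same amount under a deviation of `i`, and `ū_i` ignores every
`j` not adjacent to `i`, the mixed difference of `φ` in two non-adjacent coordinates vanishes;
this kills `φ_S` whenever `S` is not a clique. Each clique is then charged to a maximal clique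
containing it.
-/

open Finset Function

section Moebius

variable {ι : Type*} [DecidableEq ι]

def moebius (S : Finset ι) (g : Finset ι → ℝ) : ℝ :=
  ∑ T ∈ S.powerset, (-1 : ℝ) ^ #(S \ T) * g T

lemma moebius_insert {i : ι} {S : Finset ι} (hi : i ∉ S) (g : Finset ι → ℝ) :
    moebius (insert i S) g = moebius S (fun T => g (insert i T) - g T) := by
  unfold moebius
  rw [sum_powerset_insert hi, ← sum_add_distrib]
  refine sum_congr rfl fun T hT => ?_
  have hiT : i ∉ T := fun h => hi (mem_powerset.mp hT h)
  have hcard : #(insert i S \ T) = #(S \ T) + 1 := by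
    rw [insert_sdiff_of_notMem _ hiT, card_insert_of_notMem fun h => hi (mem_sdiff.mp h).1]
  rw [hcard, insert_sdiff_insert, sdiff_insert_of_notMem hi]
  ring

lemma moebius_insert_eq_zero {i : ι} {S : Finset ι} (hi : i ∉ S) {g : Finset ι → ℝ}
    (hg : ∀ T ⊆ S, g (insert i T) = g T) : moebius (insert i S) g = 0 := by
  rw [moebius_insert hi]
  exact sum_eq_zero fun T hT => by simp only [hg T (mem_powerset.mp hT), sub_self, mul_zero]

lemma moebius_eq_zero_of_insert_insert {i j : ι} {S : Finset ι} (hi : i ∈ S) (hj : j ∈ S)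
    (hij : i ≠ j) {g : Finset ι → ℝ}
    (hg : ∀ T, i ∉ T → j ∉ T →
      g (insert i (insert j T)) - g (insert j T) = g (insert i T) - g T) :
    moebius S g = 0 := by
  have hj' : j ∈ S.erase i := mem_erase.mpr ⟨hij.symm, hj⟩
  rw [← insert_erase hi, moebius_insert (notMem_erase i S), ← insert_erase hj']
  refine moebius_insert_eq_zero (notMem_erase j _) fun T hT => hg T ?_ ?_
  · exact fun h => notMem_erase i S (mem_of_mem_erase (hT h))
  · exact fun h => notMem_erase j _ (hT h)

lemma sum_powerset_moebius (U : Finset ι) (g : Finset ι → ℝ) :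
    ∑ S ∈ U.powerset, moebius S g = g U := by
  induction U using Finset.induction_on generalizing g with
  | empty => simp [moebius]
  | insert i U hi ih =>
    have hiS : ∀ S ∈ U.powerset, i ∉ S := fun S hS h => hi (mem_powerset.mp hS h)
    rw [sum_powerset_insert hi, ih, sum_congr rfl fun S hS => moebius_insert (hiS S hS) g, ih]
    ring

end Moebius

section Decomposition

variable {V : Type*} {A : V → Type*}

lemma ProfileDependsOn.mono {f : (∀ j, A j) → ℝ} {S T : Set V} (hf : ProfileDependsOn A f S)
    (hST : S ⊆ T) : ProfileDependsOn A f T :=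
  fun x y hxy => hf x y fun j hj => hxy j (hST hj)

lemma exists_maximalClique_superset [Finite V] (H : SimpleGraph V) {S : Finset V}
    (hS : H.IsClique (S : Set V)) : ∃ C, MaximalClique H C ∧ S ⊆ C := by
  obtain ⟨C, hSC, hC⟩ := Finite.exists_le_maximal (p := fun C : Finset V => H.IsClique C) hS
  exact ⟨C, ⟨hC.prop, fun D hD hCD => hC.eq_of_ge hD hCD⟩, hSC⟩

lemma exists_sum_maximalClique_eq_sum [Fintype V] (H : SimpleGraph V)
    [DecidablePred (MaximalClique H)] (m : Finset V → (∀ j, A j) → ℝ)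
    (hdep : ∀ S : Finset V, ProfileDependsOn A (m S) S)
    (hzero : ∀ S : Finset V, ¬H.IsClique (S : Set V) → m S = 0) :
    ∃ φC : Finset V → (∀ j, A j) → ℝ,
      (∀ C, MaximalClique H C → ProfileDependsOn A (φC C) C) ∧
      ∀ x, ∑ S, m S x = ∑ C ∈ univ.filter (MaximalClique H), φC C x := by
  classical
  have hpick (S : Finset V) : ∃ C, MaximalClique H C ∧ (H.IsClique (S : Set V) → S ⊆ C) := by
    by_cases hS : H.IsClique (S : Set V)
    · obtain ⟨C, hC, hSC⟩ := exists_maximalClique_superset H hS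
      exact ⟨C, hC, fun _ => hSC⟩
    · obtain ⟨C, hC, -⟩ := exists_maximalClique_superset H (S := ∅) (by simp)
      exact ⟨C, hC, fun h => absurd h hS⟩
  choose pick hpick_max hpick_sub using hpick
  refine ⟨fun C x => ∑ S ∈ univ.filter (pick · = C), m S x, fun C _ x y hxy => ?_, fun x => ?_⟩
  · refine sum_congr rfl fun S hS => ?_
    by_cases hcl : H.IsClique (S : Set V)
    · have hSC : S ⊆ C := (mem_filter.mp hS).2 ▸ hpick_sub S hcl
      exact (hdep S).mono (by exact_mod_cast hSC) x y hxy
    · rw [hzero S hcl]; rfl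
  · exact (sum_fiberwise_of_maps_to (fun S _ => mem_filter.mpr ⟨mem_univ _, hpick_max S⟩)
      (fun S => m S x)).symm

variable [DecidableEq V]

def moebiusComponent (φ : (∀ j, A j) → ℝ) (z : ∀ j, A j) (S : Finset V) (x : ∀ j, A j) : ℝ :=
  moebius S fun T => φ (T.piecewise x z)

lemma moebiusComponent_dependsOn (φ : (∀ j, A j) → ℝ) (z : ∀ j, A j) (S : Finset V) :
    ProfileDependsOn A (moebiusComponent φ z S) S := by
  intro x y hxy
  refine sum_congr rfl fun T hT => ?_
  dsimp only
  rw [piecewise_congr _ (fun j hj => hxy j (mem_powerset.mp hT hj)) fun _ _ => rfl]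

lemma sum_moebiusComponent [Fintype V] (φ : (∀ j, A j) → ℝ) (z x : ∀ j, A j) :
    ∑ S, moebiusComponent φ z S x = φ x := by
  simpa [moebiusComponent] using sum_powerset_moebius univ fun T => φ (T.piecewise x z)

lemma moebiusComponent_eq_zero {H : SimpleGraph V} {φ : (∀ j, A j) → ℝ}
    (hmix : ∀ i j, i ≠ j → ¬H.Adj i j → ∀ (x : ∀ j, A j) (a : A i) (b : A j),
      φ (update (update x j b) i a) - φ (update x j b) = φ (update x i a) - φ x)
    (z : ∀ j, A j) {S : Finset V} (hS : ¬H.IsClique (S : Set V)) :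
    moebiusComponent φ z S = 0 := by
  funext x
  obtain ⟨i, hi, j, hj, hij, hadj⟩ : ∃ i ∈ S, ∃ j ∈ S, i ≠ j ∧ ¬H.Adj i j := by
    simpa [SimpleGraph.IsClique, Set.Pairwise] using hS
  refine moebius_eq_zero_of_insert_insert hi hj hij fun T _ _ => ?_
  simp only [piecewise_insert]
  exact hmix i j hij hadj _ _ _

end Decomposition

section Game

variable {V : Type*} [DecidableEq V] {A : V → Type*}

lemma IsPotential.sub_update_eq_normalizeGame_sub [∀ i, Fintype (A i)]
    {u : V → (∀ j, A j) → ℝ} {φ : (∀ j, A j) → ℝ} (hpot : IsPotential A u φ)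
    (i : V) (x : ∀ j, A j) (a : A i) :
    φ (update x i a) - φ x = normalizeGame A u i (update x i a) - normalizeGame A u i x := by
  have hdev := hpot i (update x i a) x fun j hj => update_of_ne hj _ _
  simp only [normalizeGame, update_idem]
  linarith

lemma Graphical.apply_update_of_not_adj {u : V → (∀ j, A j) → ℝ} {E : V → V → Prop}
    (hg : Graphical A u E) {i j : V} (hij : i ≠ j) (hE : ¬E i j) (x : ∀ j, A j) (b : A j) :
    u i (update x j b) = u i x :=
  hg i _ _ (update_of_ne hij _ _) fun k hk => update_of_ne (by rintro rfl; exact hE hk) _ _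

lemma IsPotential.sub_update_update_eq [∀ i, Fintype (A i)] {u : V → (∀ j, A j) → ℝ}
    {φ : (∀ j, A j) → ℝ} {E : V → V → Prop} (hpot : IsPotential A u φ)
    (hg : Graphical A (normalizeGame A u) E) {i j : V} (hij : i ≠ j) (hE : ¬E i j)
    (x : ∀ j, A j) (a : A i) (b : A j) :
    φ (update (update x j b) i a) - φ (update x j b) = φ (update x i a) - φ x := by
  rw [hpot.sub_update_eq_normalizeGame_sub, hpot.sub_update_eq_normalizeGame_sub,
    ← update_comm hij, hg.apply_update_of_not_adj hij hE, hg.apply_update_of_not_adj hij hE]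

end Game

open scoped Classical in
/-- Corollary 2: if `u` is a potential game with potential `φ` whose normalized
version is graphical on the simple graph `H`, then `φ` decomposes as a sum of local
potentials over the maximal cliques of `H`. -/
theorem potential_clique_decomposition {V : Type*} [Fintype V] [DecidableEq V]
    {A : V → Type*} [∀ i, Fintype (A i)] [∀ i, Nonempty (A i)]
    (u : ∀ i : V, (∀ j, A j) → ℝ) (φ : (∀ j, A j) → ℝ) (H : SimpleGraph V)
    (hpot : IsPotential A u φ)
    (hg : Graphical A (normalizeGame A u) H.Adj) :
    ∃ φC : Finset V → (∀ j, A j) → ℝ,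
      (∀ C : Finset V, MaximalClique H C → ProfileDependsOn A (φC C) (C : Set V)) ∧
      ∀ x : ∀ j, A j,
        φ x = ∑ C ∈ Finset.univ.filter (fun C : Finset V => MaximalClique H C), φC C x := by
  let z : ∀ j, A j := fun j => Classical.arbitrary (A j)
  have hvanish (S : Finset V) (hS : ¬H.IsClique (S : Set V)) : moebiusComponent φ z S = 0 :=
    moebiusComponent_eq_zero (fun _ _ hij hadj => hpot.sub_update_update_eq hg hij hadj) z hS
  obtain ⟨φC, hdep, hsum⟩ := exists_sum_maximalClique_eq_sum H (moebiusComponent φ z)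
    (moebiusComponent_dependsOn φ z) hvanish
  exact ⟨φC, hdep, fun x => (sum_moebiusComponent φ z x).symm.trans (hsum x)⟩
end

section
/- (Corollary 3) Let u be a game graphical on a directed graph E. Then u can be decomposed as u = u_N + u_P + u_H, where: u_N is a non-strategic game graphical on E; u_P is a normalized potential game graphical on E^△; and u_H is a normalized harmonic game graphical on E^△. -/
/-- The graph `E^△`: it contains `(j,l)` whenever `(j,l) ∈ E` or `(l,j) ∈ E`, together
with all pairs of distinct players that are out-neighbours of a common node in `E`. -/
def triangleGraph {V : Type*} (E : V → V → Prop) : V → V → Prop :=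
  fun j l => E j l ∨ E l j ∨ (j ≠ l ∧ ∃ i, E i j ∧ E i l)

/-!
Let `T i` average a payoff over player `i`'s own action. The `T i` are commuting idempotents, so
in the commutative algebra they generate, `P S = ∏_{j ∈ S} (1 - T j) * ∏_{j ∉ S} T j` are
orthogonal idempotents summing to `1`, and the weighted Laplacian `L = ∑ i, |A i| • (1 - T i)` acts
on the range of `P S` as multiplication by `m S = ∑_{i ∈ S} |A i|`.

Put `u_N i = T i (u i)`, `ν i = u i - u_N i`, `φ = ∑_{S ≠ ∅} (m S)⁻¹ • P S (∑ i, |A i| • ν i)`,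
`u_P i = (1 - T i) φ` and `u_H = ν - u_P`. Then `φ` is a potential for `u_P`, and
`∑ i, |A i| • u_P i = L φ = ∑ i, |A i| • ν i` because `P ∅` kills every `ν i`; as `u_H` is
normalized, this identity is exactly its harmonicity. For locality, `ν i` is fixed by `T k` outside the closed neighbourhood of
`i`, and then `T l` fixes `(1 - T j) P S (ν i)` unless `j` and `l` both lie in that neighbourhood,
which for `j ≠ l` means that `(j, l)` is an edge of `E^△`.
-/

open Finset Function

section SpectralProjection

variable {ι R : Type*} [Fintype ι] [DecidableEq ι] [CommRing R]

def spectralProj (e : ι → R) (S : Finset ι) : R :=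
  (∏ j ∈ S, (1 - e j)) * ∏ j ∈ Sᶜ, e j

theorem sum_spectralProj (e : ι → R) : ∑ S, spectralProj e S = 1 := by
  simpa [spectralProj, compl_eq_univ_sdiff] using (prod_add (fun j => 1 - e j) e univ).symm

variable {e : ι → R} {i : ι} {S : Finset ι}

theorem mul_spectralProj_of_mem (he : IsIdempotentElem (e i)) (hi : i ∈ S) :
    e i * spectralProj e S = 0 := by
  rw [spectralProj, ← mul_prod_erase S _ hi, ← mul_assoc, ← mul_assoc, he.mul_one_sub_self,
    zero_mul, zero_mul]

theorem mul_spectralProj_of_notMem (he : IsIdempotentElem (e i)) (hi : i ∉ S) :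
    e i * spectralProj e S = spectralProj e S := by
  rw [spectralProj, ← mul_prod_erase Sᶜ _ (mem_compl.2 hi), mul_left_comm, ← mul_assoc (e i),
    he.eq]

theorem one_sub_mul_spectralProj_of_mem (he : IsIdempotentElem (e i)) (hi : i ∈ S) :
    (1 - e i) * spectralProj e S = spectralProj e S := by
  rw [sub_mul, mul_spectralProj_of_mem he hi, one_mul, sub_zero]

theorem one_sub_mul_spectralProj_of_notMem (he : IsIdempotentElem (e i)) (hi : i ∉ S) :
    (1 - e i) * spectralProj e S = 0 := by
  rw [sub_mul, mul_spectralProj_of_notMem he hi, one_mul, sub_self]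

section Module

variable {M : Type*} [AddCommGroup M] [Module R M] {f : M}

theorem spectralProj_smul_eq_zero (he : IsIdempotentElem (e i)) (hi : i ∈ S) (hf : e i • f = f) :
    spectralProj e S • f = 0 := by
  rw [← hf, ← mul_smul, mul_comm, mul_spectralProj_of_mem he hi, zero_smul]

theorem spectralProj_empty_smul_one_sub_smul (he : IsIdempotentElem (e i)) :
    spectralProj e ∅ • (1 - e i) • f = 0 := by
  rw [← mul_smul, mul_comm, one_sub_mul_spectralProj_of_notMem he (notMem_empty i), zero_smul]

variable {W : Set ι} {j l : ι}

theorem one_sub_mul_spectralProj_smul_eq_zero (he : ∀ k, IsIdempotentElem (e k))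
    (hf : ∀ k ∉ W, e k • f = f) (hj : j ∉ W) : ((1 - e j) * spectralProj e S) • f = 0 := by
  by_cases hjS : j ∈ S
  · rw [one_sub_mul_spectralProj_of_mem (he j) hjS, spectralProj_smul_eq_zero (he j) hjS (hf j hj)]
  · rw [one_sub_mul_spectralProj_of_notMem (he j) hjS, zero_smul]

theorem smul_one_sub_mul_spectralProj_smul (he : ∀ k, IsIdempotentElem (e k))
    (hf : ∀ k ∉ W, e k • f = f) (hlj : l ∈ W → j ∉ W) :
    e l • ((1 - e j) * spectralProj e S) • f = ((1 - e j) * spectralProj e S) • f := by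
  by_cases hlS : l ∈ S
  · by_cases hlW : l ∈ W
    · rw [one_sub_mul_spectralProj_smul_eq_zero he hf (hlj hlW), smul_zero]
    · rw [mul_smul, spectralProj_smul_eq_zero (he l) hlS (hf l hlW), smul_zero, smul_zero]
  · rw [← mul_smul, mul_left_comm, mul_spectralProj_of_notMem (he l) hlS]

end Module

section Laplacian

variable {𝕜 : Type*} [Field 𝕜] [Algebra 𝕜 R]

def laplacian (c : ι → 𝕜) (e : ι → R) : R := ∑ i, c i • (1 - e i)

def laplacianPinv (c : ι → 𝕜) (e : ι → R) : R :=
  ∑ S ∈ univ.erase ∅, (∑ i ∈ S, c i)⁻¹ • spectralProj e S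

theorem laplacian_mul_spectralProj (c : ι → 𝕜) (he : ∀ k, IsIdempotentElem (e k))
    (S : Finset ι) : laplacian c e * spectralProj e S = (∑ i ∈ S, c i) • spectralProj e S := by
  have hterm : ∀ i, c i • (1 - e i) * spectralProj e S =
      if i ∈ S then c i • spectralProj e S else 0 := by
    intro i
    split_ifs with hi
    · rw [smul_mul_assoc, one_sub_mul_spectralProj_of_mem (he i) hi]
    · rw [smul_mul_assoc, one_sub_mul_spectralProj_of_notMem (he i) hi, smul_zero]
  rw [laplacian, sum_mul, sum_congr rfl fun i _ => hterm i, sum_ite_mem, univ_inter, sum_smul]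

variable {M : Type*} [AddCommGroup M] [Module R M] [Module 𝕜 M] [IsScalarTower 𝕜 R M] {f : M}

theorem smul_one_sub_mul_laplacianPinv_smul {W : Set ι} {j l : ι} (c : ι → 𝕜)
    (he : ∀ k, IsIdempotentElem (e k)) (hf : ∀ k ∉ W, e k • f = f) (hlj : l ∈ W → j ∉ W) :
    e l • ((1 - e j) * laplacianPinv c e) • f = ((1 - e j) * laplacianPinv c e) • f := by
  simp only [laplacianPinv, mul_sum, mul_smul_comm, sum_smul, smul_assoc, smul_sum]
  refine sum_congr rfl fun S _ => ?_
  rw [smul_comm (e l), smul_one_sub_mul_spectralProj_smul he hf hlj]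

variable [LinearOrder 𝕜] [IsStrictOrderedRing 𝕜] {c : ι → 𝕜}

theorem laplacian_mul_laplacianPinv (hc : ∀ i, 0 < c i) (he : ∀ k, IsIdempotentElem (e k)) :
    laplacian c e * laplacianPinv c e = 1 - spectralProj e ∅ := by
  have hS : ∀ S ∈ univ.erase (∅ : Finset ι),
      laplacian c e * ((∑ i ∈ S, c i)⁻¹ • spectralProj e S) = spectralProj e S := by
    intro S hS
    have hpos : 0 < ∑ i ∈ S, c i :=
      sum_pos (fun i _ => hc i) (nonempty_iff_ne_empty.2 (ne_of_mem_erase hS))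
    rw [mul_smul_comm, laplacian_mul_spectralProj c he, smul_smul, inv_mul_cancel₀ hpos.ne',
      one_smul]
  rw [laplacianPinv, mul_sum, sum_congr rfl hS, sum_erase_eq_sub (mem_univ _), sum_spectralProj]

theorem sum_smul_one_sub_smul_laplacianPinv_smul (hc : ∀ i, 0 < c i)
    (he : ∀ k, IsIdempotentElem (e k)) (hf : spectralProj e ∅ • f = 0) :
    ∑ i, c i • (1 - e i) • laplacianPinv c e • f = f := by
  calc ∑ i, c i • (1 - e i) • laplacianPinv c e • f
      = (laplacian c e * laplacianPinv c e) • f := by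
        rw [mul_smul, laplacian, sum_smul]
        simp only [smul_assoc]
    _ = f := by rw [laplacian_mul_laplacianPinv hc he, sub_smul, one_smul, hf, sub_zero]

end Laplacian

end SpectralProjection

section Averaging

variable {V : Type*} [DecidableEq V] {A : V → Type*}

theorem eq_of_forall_update_eq {β : Type*} {f : (∀ j, A j) → β} (s : Finset V)
    (hf : ∀ l ∈ s, ∀ x b, f (update x l b) = f x) {x y : ∀ j, A j}
    (hxy : ∀ j ∉ s, x j = y j) : f x = f y := by
  induction s using Finset.induction generalizing x with
  | empty => exact congrArg f (funext fun j => hxy j (notMem_empty j))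
  | insert a s ha ih =>
    rw [← hf a (mem_insert_self a s) x (y a)]
    refine ih (fun l hl => hf l (mem_insert_of_mem hl)) fun j hj => ?_
    rcases eq_or_ne j a with rfl | hja
    · exact update_self j (y j) x
    · rw [update_of_ne hja]
      exact hxy j (by simp [hja, hj])

variable [∀ i, Fintype (A i)]

variable (A) in
noncomputable def average (i : V) : Module.End ℝ ((∀ j, A j) → ℝ) :=
  (Fintype.card (A i) : ℝ)⁻¹ • ∑ a : A i, LinearMap.funLeft ℝ ℝ (fun x => update x i a)

variable {i : V} {f : (∀ j, A j) → ℝ}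

theorem average_apply (x : ∀ j, A j) :
    average A i f x = (Fintype.card (A i) : ℝ)⁻¹ * ∑ a : A i, f (update x i a) := by
  simp [average, LinearMap.funLeft]

theorem average_update (x : ∀ j, A j) (b : A i) :
    average A i f (update x i b) = average A i f x := by
  simp [average_apply]

theorem average_eq_of_forall_ne {x y : ∀ j, A j} (hxy : ∀ j ≠ i, x j = y j) :
    average A i f x = average A i f y := by
  have hx : x = update y i (x i) := eq_update_iff.2 ⟨rfl, hxy⟩
  rw [← average_update (f := f) y (x i), ← hx]

theorem average_mul_comm (i j : V) : average A i * average A j = average A j * average A i := by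
  ext f x
  rcases eq_or_ne i j with rfl | hij
  · rfl
  simp only [Module.End.mul_apply, average_apply, mul_sum]
  rw [sum_comm]
  simp only [update_comm hij, mul_left_comm]

variable [∀ i, Nonempty (A i)]

theorem average_eq_self_iff : average A i f = f ↔ ∀ x b, f (update x i b) = f x := by
  refine ⟨fun h x b => by rw [← h, average_update], fun h => funext fun x => ?_⟩
  simp [average_apply, h, Fintype.card_ne_zero]

theorem isIdempotentElem_average (i : V) : IsIdempotentElem (average A i) :=
  LinearMap.ext fun _ => average_eq_self_iff.2 fun _ _ => average_update _ _

theorem sum_update_eq_zero_of_average_eq_zero (h : average A i f = 0) (x : ∀ j, A j) :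
    ∑ a : A i, f (update x i a) = 0 := by
  simpa [average_apply, Fintype.card_ne_zero] using congrFun h x

end Averaging

section GameProperties

variable {V : Type*} {A : V → Type*} {u v : V → (∀ j, A j) → ℝ} {E E' : V → V → Prop}

theorem Graphical.mono (hu : Graphical A u E) (hE : ∀ i j, E i j → E' i j) : Graphical A u E' :=
  fun i x y hi hN => hu i x y hi fun j hj => hN j (hE i j hj)

theorem Graphical.sub (hu : Graphical A u E) (hv : Graphical A v E) : Graphical A (u - v) E :=
  fun i x y hi hN => by simp only [Pi.sub_apply, hu i x y hi hN, hv i x y hi hN]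

theorem triangleGraph_of_closedNbhd {i j l : V} (hlj : l ≠ j) (hl : l = i ∨ E i l)
    (hj : j = i ∨ E i j) : triangleGraph E j l := by
  rcases hl with rfl | hl <;> rcases hj with rfl | hj
  · exact absurd rfl hlj
  · exact Or.inr (Or.inl hj)
  · exact Or.inl hl
  · exact Or.inr (Or.inr ⟨hlj.symm, i, hj, hl⟩)

variable [DecidableEq V] [∀ i, Fintype (A i)]

theorem isPotential_sub_average (φ : (∀ j, A j) → ℝ) :
    IsPotential A (fun i => φ - average A i φ) φ := by
  intro i x y hxy
  simp only [Pi.sub_apply, average_eq_of_forall_ne hxy]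
  ring

theorem normalized_of_average_eq_zero [∀ i, Nonempty (A i)] (h : ∀ i, average A i (u i) = 0) :
    Normalized A u :=
  fun i => sum_update_eq_zero_of_average_eq_zero (h i)

variable [Fintype V]

theorem graphical_iff_average_eq_self [∀ i, Nonempty (A i)] :
    Graphical A u E ↔ ∀ i l, l ≠ i → ¬ E i l → average A l (u i) = u i := by
  classical
  refine ⟨fun hg i l hli hl => average_eq_self_iff.2 fun x b => ?_, fun h i x y hi hN => ?_⟩
  · refine hg i _ _ (update_of_ne hli.symm b x) fun j hj => update_of_ne ?_ b x
    rintro rfl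
    exact hl hj
  · refine eq_of_forall_update_eq {l | l ≠ i ∧ ¬ E i l} (fun l hl => ?_) fun j hj => ?_
    · simp only [Finset.mem_filter, mem_univ, true_and] at hl
      exact average_eq_self_iff.1 (h i l hl.1 hl.2)
    · simp only [Finset.mem_filter, mem_univ, true_and, not_and, not_not] at hj
      by_cases hji : j = i
      · exact hji ▸ hi
      · exact hN j (hj hji)

theorem graphical_average [∀ i, Nonempty (A i)] (hg : Graphical A u E) :
    Graphical A (fun i => average A i (u i)) E := by
  refine graphical_iff_average_eq_self.2 fun i l hli hl => ?_
  rw [← Module.End.mul_apply, average_mul_comm, Module.End.mul_apply,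
    graphical_iff_average_eq_self.1 hg i l hli hl]

theorem harmonic_of_normalized (hu : Normalized A u)
    (h : ∑ i, (Fintype.card (A i) : ℝ) • u i = 0) : Harmonic A u := by
  intro x
  have hx : ∑ i, (Fintype.card (A i) : ℝ) * u i x = 0 := by
    simpa using congrFun h x
  rw [← hx]
  refine sum_congr rfl fun i _ => ?_
  rw [sum_sub_distrib, hu i x, sum_const, card_univ, nsmul_eq_mul, sub_zero]

end GameProperties

section Decomposition

variable {V : Type*} [DecidableEq V] {A : V → Type*} [∀ i, Fintype (A i)]

variable (A) in
/-- The algebra generated by the commuting operators `average A i`, as a type synonym so that its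
only ring structure is the commutative one. -/
def AveragingAlgebra : Type _ := ↥(Algebra.adjoin ℝ (Set.range (average A)))

noncomputable instance : CommRing (AveragingAlgebra A) :=
  @CommRing.mk _ (inferInstanceAs (Ring ↥(Algebra.adjoin ℝ (Set.range (average A)))))
    (Algebra.isMulCommutative_adjoin ℝ (by
      rintro _ ⟨i, rfl⟩ _ ⟨j, rfl⟩
      exact average_mul_comm i j)).is_comm.comm

noncomputable instance : Algebra ℝ (AveragingAlgebra A) :=
  (Algebra.adjoin ℝ (Set.range (average A))).algebra

variable (A) in
noncomputable def AveragingAlgebra.val : AveragingAlgebra A →ₐ[ℝ] Module.End ℝ ((∀ j, A j) → ℝ) :=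
  (Algebra.adjoin ℝ (Set.range (average A))).val

noncomputable instance : Module (AveragingAlgebra A) ((∀ j, A j) → ℝ) :=
  Module.compHom _ (AveragingAlgebra.val A).toRingHom

instance : IsScalarTower ℝ (AveragingAlgebra A) ((∀ j, A j) → ℝ) :=
  ⟨fun c r f => by
    show AveragingAlgebra.val A (c • r) f = c • AveragingAlgebra.val A r f
    rw [map_smul]
    rfl⟩

variable (A) in
noncomputable def averageElem (i : V) : AveragingAlgebra A :=
  ⟨average A i, Algebra.subset_adjoin ⟨i, rfl⟩⟩

theorem averageElem_smul (i : V) (f : (∀ j, A j) → ℝ) : averageElem A i • f = average A i f :=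
  rfl

section Nonempty

variable [∀ i, Nonempty (A i)]

theorem isIdempotentElem_averageElem (i : V) : IsIdempotentElem (averageElem A i) :=
  Subtype.ext (isIdempotentElem_average i)

theorem average_one_sub_averageElem_smul (i : V) (f : (∀ j, A j) → ℝ) :
    average A i ((1 - averageElem A i) • f) = 0 := by
  rw [← averageElem_smul, ← mul_smul, (isIdempotentElem_averageElem i).mul_one_sub_self,
    zero_smul]

end Nonempty

variable (u : V → (∀ j, A j) → ℝ)

noncomputable def normalizedPart (i : V) : (∀ j, A j) → ℝ :=
  (1 - averageElem A i) • u i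

theorem normalizedPart_eq (i : V) : normalizedPart u i = u i - average A i (u i) := by
  rw [normalizedPart, sub_smul, one_smul, averageElem_smul]

variable [Fintype V]

noncomputable def potential : (∀ j, A j) → ℝ :=
  laplacianPinv (fun i => (Fintype.card (A i) : ℝ)) (averageElem A) •
    ∑ i, (Fintype.card (A i) : ℝ) • normalizedPart u i

noncomputable def potentialPart (i : V) : (∀ j, A j) → ℝ :=
  (1 - averageElem A i) • potential u

theorem isPotential_potentialPart : IsPotential A (potentialPart u) (potential u) := by
  have h : potentialPart u = fun i => potential u - average A i (potential u) := by
    ext1 i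
    rw [potentialPart, sub_smul, one_smul, averageElem_smul]
  exact h ▸ isPotential_sub_average (potential u)

variable [∀ i, Nonempty (A i)]

theorem sum_card_smul_potentialPart :
    ∑ i, (Fintype.card (A i) : ℝ) • potentialPart u i =
      ∑ i, (Fintype.card (A i) : ℝ) • normalizedPart u i := by
  refine sum_smul_one_sub_smul_laplacianPinv_smul (fun i => Nat.cast_pos.2 Fintype.card_pos)
    isIdempotentElem_averageElem ((Finset.smul_sum ..).trans (sum_eq_zero fun i _ => ?_))
  rw [smul_comm, normalizedPart,
    spectralProj_empty_smul_one_sub_smul (isIdempotentElem_averageElem i), smul_zero]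

variable {u} {E : V → V → Prop}

theorem graphical_normalizedPart (hg : Graphical A u E) : Graphical A (normalizedPart u) E := by
  refine graphical_iff_average_eq_self.2 fun i l hli hl => ?_
  rw [normalizedPart, ← averageElem_smul, smul_comm, averageElem_smul,
    graphical_iff_average_eq_self.1 hg i l hli hl]

theorem graphical_potentialPart (hg : Graphical A u E) :
    Graphical A (potentialPart u) (triangleGraph E) := by
  refine graphical_iff_average_eq_self.2 fun j l hlj hT => ?_
  rw [← averageElem_smul, potentialPart, potential, ← mul_smul (1 - averageElem A j),
    Finset.smul_sum, Finset.smul_sum]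
  refine Finset.sum_congr rfl fun i _ => ?_
  rw [smul_comm _ (Fintype.card (A i) : ℝ), smul_comm _ (Fintype.card (A i) : ℝ)]
  congr 1
  refine smul_one_sub_mul_laplacianPinv_smul (W := {k | k = i ∨ E i k}) _
    isIdempotentElem_averageElem (fun k hk => ?_)
    fun hl hj => hT (triangleGraph_of_closedNbhd hlj hl hj)
  obtain ⟨hki, hik⟩ := not_or.1 hk
  rw [normalizedPart, smul_comm, averageElem_smul, graphical_iff_average_eq_self.1 hg i k hki hik]

end Decomposition

theorem decomposition_of_graphical_general {V : Type*} [Fintype V] [DecidableEq V]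
    {A : V → Type*} [∀ i, Fintype (A i)] [∀ i, Nonempty (A i)]
    (u : ∀ i : V, (∀ j, A j) → ℝ) (E : V → V → Prop)
    (hg : Graphical A u E) :
    ∃ uN uP uH : ∀ i : V, (∀ j, A j) → ℝ,
      (∀ i x, u i x = uN i x + uP i x + uH i x) ∧
      NonStrategic A uN ∧ Graphical A uN E ∧
      Normalized A uP ∧ (∃ φ, IsPotential A uP φ) ∧ Graphical A uP (triangleGraph E) ∧
      Normalized A uH ∧ Harmonic A uH ∧ Graphical A uH (triangleGraph E) := by
  have hP := graphical_potentialPart hg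
  have hH : Normalized A (normalizedPart u - potentialPart u) :=
    normalized_of_average_eq_zero fun i => by
      rw [Pi.sub_apply, map_sub, normalizedPart, potentialPart, average_one_sub_averageElem_smul,
        average_one_sub_averageElem_smul, sub_zero]
  refine ⟨fun i => average A i (u i), potentialPart u, normalizedPart u - potentialPart u,
    fun i x => ?_, fun _ _ _ => average_eq_of_forall_ne, graphical_average hg,
    normalized_of_average_eq_zero fun i => average_one_sub_averageElem_smul i _,
    ⟨potential u, isPotential_potentialPart u⟩, hP, hH, harmonic_of_normalized hH ?_,
    ((graphical_normalizedPart hg).mono fun _ _ => Or.inl).sub hP⟩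
  · simp only [Pi.sub_apply, normalizedPart_eq]
    ring
  · simp only [Pi.sub_apply, smul_sub, sum_sub_distrib, sum_card_smul_potentialPart, sub_self]

/-- Corollary 3: every game graphical on `E` decomposes as `u = u_N + u_P + u_H` with
`u_N` non-strategic and graphical on `E`, `u_P` a normalized potential game graphical
on `E^△`, and `u_H` a normalized harmonic game graphical on `E^△`. -/
theorem decomposition_of_graphical {V : Type*} [Fintype V] [DecidableEq V]
    {A : V → Type*} [∀ i, Fintype (A i)] [∀ i, Nonempty (A i)]
    (u : ∀ i : V, (∀ j, A j) → ℝ) (E : V → V → Prop) (hirr : ∀ i, ¬ E i i)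
    (hg : Graphical A u E) :
    ∃ uN uP uH : ∀ i : V, (∀ j, A j) → ℝ,
      (∀ i x, u i x = uN i x + uP i x + uH i x) ∧
      NonStrategic A uN ∧ Graphical A uN E ∧
      Normalized A uP ∧ (∃ φ, IsPotential A uP φ) ∧ Graphical A uP (triangleGraph E) ∧
      Normalized A uH ∧ Harmonic A uH ∧ Graphical A uH (triangleGraph E) :=
  decomposition_of_graphical_general u E hg
end

section
/- (Corollary 4) Let u be a pairwise-separable graphical game on a directed graph E, i.e., u_i(x) = Σ_{j ∈ N_i} u_{ij}(x_i, x_j) for some functions u_{ij} : A_i × A_j → ℝ. Then u can be decomposed as u = u_N + u_P + u_H, where: u_N is a non-strategic game graphical on E; u_P is a pairwise-separable normalized potential game on the symmetric closure E^↔; and u_H is a pairwise-separable normalized harmonic game on E^↔. -/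
open Finset

/-- A game `v` is *pairwise-separable* on the graph `F`:
`v_i(x) = Σ_{j ∈ N_i(F)} v_{ij}(x_i, x_j)` for some two-player utilities `v_{ij}`. -/
def PairwiseSeparable {V : Type*} [Fintype V] (A : V → Type*)
    (v : ∀ i : V, (∀ j, A j) → ℝ) (F : V → V → Prop) [∀ i j, Decidable (F i j)] : Prop :=
  ∃ vij : ∀ i j : V, A i → A j → ℝ,
    ∀ i : V, ∀ x : ∀ j, A j,
      v i x = ∑ j ∈ Finset.univ.filter (fun j => F i j), vij i j (x i) (x j)


set_option linter.unusedSectionVars false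
namespace Cor4

variable {V : Type*} [Fintype V] [DecidableEq V] {A : V → Type*} [∀ i, Fintype (A i)]

noncomputable def cardR (A : V → Type*) [∀ i, Fintype (A i)] (i : V) : ℝ :=
  (Fintype.card (A i) : ℝ)

lemma cardR_pos (A : V → Type*) [∀ i, Fintype (A i)] [∀ i, Nonempty (A i)] (i : V) :
    0 < cardR A i := by
  have := Fintype.card_pos (α := A i)
  unfold cardR
  exact_mod_cast this

variable (E : V → V → Prop) [∀ i j, Decidable (E i j)] (uij : ∀ i j : V, A i → A j → ℝ)

noncomputable def ee (i j : V) (a : A i) (b : A j) : ℝ := if E i j then uij i j a b else 0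

noncomputable def w (i j : V) (a : A i) (b : A j) : ℝ :=
  ee E uij i j a b - (∑ a' : A i, ee E uij i j a' b) / cardR A i

noncomputable def wbar (i j : V) (a : A i) : ℝ := (∑ b : A j, w E uij i j a b) / cardR A j

noncomputable def phi (i j : V) (a : A i) (b : A j) : ℝ :=
  (cardR A i * w E uij i j a b + cardR A j * w E uij j i b a
    + cardR A j * wbar E uij i j a + cardR A i * wbar E uij j i b) / (cardR A i + cardR A j)

noncomputable def pp (i j : V) (a : A i) (b : A j) : ℝ :=
  phi E uij i j a b - wbar E uij j i b

noncomputable def hh (i j : V) (a : A i) (b : A j) : ℝ :=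
  w E uij i j a b - pp E uij i j a b

variable [∀ i, Nonempty (A i)]

lemma sum_w (i j : V) (b : A j) : ∑ a : A i, w E uij i j a b = 0 := by
  have hc : cardR A i ≠ 0 := (cardR_pos A i).ne'
  simp only [w, Finset.sum_sub_distrib, Finset.sum_const, card_univ, nsmul_eq_mul]
  have : ((Fintype.card (A i) : ℝ)) = cardR A i := rfl
  rw [this, mul_div_cancel₀ _ hc, sub_self]

lemma sum_wbar (i j : V) : ∑ a : A i, wbar E uij i j a = 0 := by
  simp only [wbar, ← Finset.sum_div]
  rw [Finset.sum_comm]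
  simp [sum_w E uij]

lemma sum_w' (i j : V) (b : A j) :
    ∑ a : A i, w E uij j i b a = cardR A i * wbar E uij j i b := by
  have hc : cardR A i ≠ 0 := (cardR_pos A i).ne'
  rw [wbar, mul_div_cancel₀ _ hc]

lemma phi_symm (i j : V) (a : A i) (b : A j) :
    phi E uij i j a b = phi E uij j i b a := by
  unfold phi
  ring

lemma sum_phi (i j : V) (b : A j) :
    ∑ a : A i, phi E uij i j a b = cardR A i * wbar E uij j i b := by
  have hci : cardR A i ≠ 0 := (cardR_pos A i).ne'
  have h1 := cardR_pos A i
  have h2 := cardR_pos A j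
  have hcij : cardR A i + cardR A j ≠ 0 := by linarith
  simp only [phi, ← Finset.sum_div, Finset.sum_add_distrib, ← Finset.mul_sum,
    Finset.sum_const, card_univ, nsmul_eq_mul]
  rw [sum_w, sum_wbar, sum_w']
  have : ((Fintype.card (A i) : ℝ)) = cardR A i := rfl
  rw [this]
  field_simp
  ring

lemma sum_pp (i j : V) (b : A j) : ∑ a : A i, pp E uij i j a b = 0 := by
  simp only [pp, Finset.sum_sub_distrib, sum_phi, Finset.sum_const, card_univ, nsmul_eq_mul]
  have : ((Fintype.card (A i) : ℝ)) = cardR A i := rfl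
  rw [this, sub_self]

lemma sum_hh (i j : V) (b : A j) : ∑ a : A i, hh E uij i j a b = 0 := by
  simp only [hh, Finset.sum_sub_distrib, sum_pp, sum_w, sub_self]

lemma key (i j : V) (a : A i) (b : A j) :
    cardR A i * hh E uij i j a b + cardR A j * hh E uij j i b a = 0 := by
  have h1 := cardR_pos A i
  have h2 := cardR_pos A j
  have hcij : cardR A i + cardR A j ≠ 0 := by linarith
  unfold hh pp
  rw [← phi_symm]
  unfold phi
  field_simp
  ring

lemma pp_diff (i j : V) (a a' : A i) (b : A j) :
    pp E uij i j a b - pp E uij i j a' b = phi E uij i j a b - phi E uij i j a' b := by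
  unfold pp; ring



noncomputable def uNg (i : V) (x : ∀ j, A j) : ℝ :=
  ∑ j ∈ univ.filter (fun j => E i j), (∑ a : A i, uij i j a (x j)) / cardR A i

noncomputable def uPg (i : V) (x : ∀ j, A j) : ℝ :=
  ∑ j ∈ univ.filter (fun j => E i j ∨ E j i), pp E uij i j (x i) (x j)

noncomputable def uHg (i : V) (x : ∀ j, A j) : ℝ :=
  ∑ j ∈ univ.filter (fun j => E i j ∨ E j i), hh E uij i j (x i) (x j)

noncomputable def Phi (x : ∀ j, A j) : ℝ :=
  (∑ i, ∑ j ∈ univ.filter (fun j => E i j ∨ E j i), phi E uij i j (x i) (x j)) / 2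

lemma decomp (i : V) (x : ∀ j, A j) :
    (∑ j ∈ univ.filter (fun j => E i j), uij i j (x i) (x j))
      = uNg E uij i x + uPg E uij i x + uHg E uij i x := by
  have hPH : uPg E uij i x + uHg E uij i x
      = ∑ j ∈ univ.filter (fun j => E i j ∨ E j i), w E uij i j (x i) (x j) := by
    rw [uPg, uHg, ← Finset.sum_add_distrib]
    refine Finset.sum_congr rfl fun j _ => ?_
    unfold hh; ring
  have hsub : (univ.filter (fun j => E i j)) ⊆ (univ.filter (fun j => E i j ∨ E j i)) := by
    intro j hj
    simp only [mem_filter, mem_univ, true_and] at hj ⊢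
    exact Or.inl hj
  have hEw : ∑ j ∈ univ.filter (fun j => E i j ∨ E j i), w E uij i j (x i) (x j)
      = ∑ j ∈ univ.filter (fun j => E i j), w E uij i j (x i) (x j) := by
    refine (Finset.sum_subset hsub fun j _ hj => ?_).symm
    simp only [mem_filter, mem_univ, true_and] at hj
    simp [w, ee, hj]
  rw [add_assoc, hPH, hEw, uNg, ← Finset.sum_add_distrib]
  refine Finset.sum_congr rfl fun j hj => ?_
  simp only [mem_filter, mem_univ, true_and] at hj
  simp [w, ee, hj]

lemma uNg_nonstrategic (hirr : ∀ i, ¬ E i i) : NonStrategic A (uNg E uij) := by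
  intro i x y hxy
  refine Finset.sum_congr rfl fun j hj => ?_
  simp only [mem_filter, mem_univ, true_and] at hj
  have hji : j ≠ i := fun h => hirr i (h ▸ hj)
  rw [hxy j hji]

lemma uNg_graphical : Graphical A (uNg E uij) E := by
  intro i x y _ hxy
  refine Finset.sum_congr rfl fun j hj => ?_
  simp only [mem_filter, mem_univ, true_and] at hj
  rw [hxy j hj]

lemma filter_ne (hirr : ∀ i, ¬ E i i) (i j : V)
    (hj : j ∈ univ.filter (fun j => E i j ∨ E j i)) : j ≠ i := by
  simp only [mem_filter, mem_univ, true_and] at hj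
  rintro rfl
  exact hj.elim (hirr j) (hirr j)

lemma uPg_normalized (hirr : ∀ i, ¬ E i i) : Normalized A (uPg E uij) := by
  intro i x
  have : ∀ a : A i, uPg E uij i (Function.update x i a)
      = ∑ j ∈ univ.filter (fun j => E i j ∨ E j i), pp E uij i j a (x j) := by
    intro a
    refine Finset.sum_congr rfl fun j hj => ?_
    rw [Function.update_self, Function.update_of_ne (filter_ne E hirr i j hj)]
  simp only [this]
  rw [Finset.sum_comm]
  simp [sum_pp E uij]

lemma uHg_normalized (hirr : ∀ i, ¬ E i i) : Normalized A (uHg E uij) := by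
  intro i x
  have : ∀ a : A i, uHg E uij i (Function.update x i a)
      = ∑ j ∈ univ.filter (fun j => E i j ∨ E j i), hh E uij i j a (x j) := by
    intro a
    refine Finset.sum_congr rfl fun j hj => ?_
    rw [Function.update_self, Function.update_of_ne (filter_ne E hirr i j hj)]
  simp only [this]
  rw [Finset.sum_comm]
  simp [sum_hh E uij]



lemma pair_cancel {G : V → V → ℝ} (hz : ∀ i j, G i j + G j i = 0) :
    ∑ i : V, ∑ j : V, G i j = 0 := by
  have hswap : ∑ i : V, ∑ j : V, G i j = ∑ j : V, ∑ i : V, G i j := Finset.sum_comm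
  have h2 : (∑ i : V, ∑ j : V, G i j) + (∑ i : V, ∑ j : V, G i j) = 0 := by
    nth_rewrite 2 [hswap]
    rw [← Finset.sum_add_distrib]
    refine Finset.sum_eq_zero fun i _ => ?_
    rw [← Finset.sum_add_distrib]
    exact Finset.sum_eq_zero fun j _ => hz i j
  linarith

lemma uHg_harmonic (hirr : ∀ i, ¬ E i i) : Harmonic A (uHg E uij) := by
  intro x
  have hnorm := uHg_normalized E uij hirr
  have step1 : ∀ i : V, ∑ a : A i, (uHg E uij i x - uHg E uij i (Function.update x i a))
      = cardR A i * uHg E uij i x := by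
    intro i
    rw [Finset.sum_sub_distrib, hnorm i x, sub_zero, Finset.sum_const, card_univ, nsmul_eq_mul]
    rfl
  simp only [step1]
  have expand : ∀ i : V, cardR A i * uHg E uij i x
      = ∑ j : V, (if E i j ∨ E j i then cardR A i * hh E uij i j (x i) (x j) else 0) := by
    intro i
    rw [uHg, Finset.mul_sum, Finset.sum_filter]
  simp only [expand]
  refine pair_cancel fun i j => ?_
  by_cases hij : E i j ∨ E j i
  · have hji : E j i ∨ E i j := hij.symm
    rw [if_pos hij, if_pos hji]
    exact key E uij i j (x i) (x j)
  · have hji : ¬ (E j i ∨ E i j) := fun h => hij h.symm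
    rw [if_neg hij, if_neg hji, add_zero]

lemma uPg_potential (hirr : ∀ i, ¬ E i i) : IsPotential A (uPg E uij) (Phi E uij) := by
  intro i x y hxy
  have hiF : i ∉ univ.filter (fun j => E i j ∨ E j i) := by
    simp only [mem_filter, mem_univ, true_and]
    exact fun h => h.elim (hirr i) (hirr i)
  have hT : uPg E uij i x - uPg E uij i y
      = ∑ j ∈ univ.filter (fun j => E i j ∨ E j i),
          (phi E uij i j (x i) (x j) - phi E uij i j (y i) (x j)) := by
    rw [uPg, uPg, ← Finset.sum_sub_distrib]
    refine Finset.sum_congr rfl fun j hj => ?_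
    have hji : j ≠ i := filter_ne E hirr i j hj
    rw [← hxy j hji]
    exact pp_diff E uij i j (x i) (y i) (x j)
  rw [hT, Phi, Phi, div_sub_div_same, ← Finset.sum_sub_distrib]
  have hgi : (∑ j ∈ univ.filter (fun j => E i j ∨ E j i), phi E uij i j (x i) (x j))
      - (∑ j ∈ univ.filter (fun j => E i j ∨ E j i), phi E uij i j (y i) (y j))
      = ∑ j ∈ univ.filter (fun j => E i j ∨ E j i),
          (phi E uij i j (x i) (x j) - phi E uij i j (y i) (x j)) := by
    rw [← Finset.sum_sub_distrib]
    refine Finset.sum_congr rfl fun j hj => ?_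
    rw [← hxy j (filter_ne E hirr i j hj)]
  have hgk : ∀ k ∈ univ.erase i,
      (∑ j ∈ univ.filter (fun j => E k j ∨ E j k), phi E uij k j (x k) (x j))
      - (∑ j ∈ univ.filter (fun j => E k j ∨ E j k), phi E uij k j (y k) (y j))
      = (if k ∈ univ.filter (fun j => E i j ∨ E j i)
          then phi E uij i k (x i) (x k) - phi E uij i k (y i) (x k) else 0) := by
    intro k hk
    have hki : k ≠ i := Finset.ne_of_mem_erase hk
    rw [← Finset.sum_sub_distrib]
    have hterm : ∀ j ∈ univ.filter (fun j => E k j ∨ E j k),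
        (phi E uij k j (x k) (x j) - phi E uij k j (y k) (y j))
        = (if j = i then phi E uij i k (x i) (x k) - phi E uij i k (y i) (x k) else 0) := by
      intro j hj
      by_cases hji : j = i
      · subst hji
        rw [if_pos rfl, ← hxy k hki, phi_symm E uij j k (x j) (x k), phi_symm E uij j k (y j) (x k)]
      · rw [if_neg hji, ← hxy j hji, ← hxy k hki, sub_self]
    rw [Finset.sum_congr rfl hterm, Finset.sum_ite_eq' (univ.filter (fun j => E k j ∨ E j k)) i]
    congr 1
    simp only [mem_filter, mem_univ, true_and]
    rw [or_comm]
  rw [← Finset.add_sum_erase _ _ (mem_univ i), hgi,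
    Finset.sum_congr rfl hgk]
  have : ∑ k ∈ univ.erase i,
      (if k ∈ univ.filter (fun j => E i j ∨ E j i)
        then phi E uij i k (x i) (x k) - phi E uij i k (y i) (x k) else 0)
      = ∑ k ∈ univ.filter (fun j => E i j ∨ E j i),
          (phi E uij i k (x i) (x k) - phi E uij i k (y i) (x k)) := by
    rw [Finset.sum_ite_mem]
    congr 1
    rw [Finset.erase_inter, Finset.univ_inter]
    exact (Finset.erase_eq_of_notMem hiF)
  rw [this]
  ring

end Cor4

/-- Corollary 4: every pairwise-separable graphical game `u` on `E` decomposes as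
`u = u_N + u_P + u_H` with `u_N` non-strategic and graphical on `E`, `u_P` a
pairwise-separable normalized potential game on the symmetric closure `E^↔`, and
`u_H` a pairwise-separable normalized harmonic game on `E^↔`. -/
theorem decomposition_pairwise_separable {V : Type*} [Fintype V] [DecidableEq V]
    {A : V → Type*} [∀ i, Fintype (A i)] [∀ i, Nonempty (A i)]
    (E : V → V → Prop) [∀ i j, Decidable (E i j)] (hirr : ∀ i, ¬ E i i)
    (u : ∀ i : V, (∀ j, A j) → ℝ) (uij : ∀ i j : V, A i → A j → ℝ)
    (hu : ∀ i : V, ∀ x : ∀ j, A j,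
      u i x = ∑ j ∈ Finset.univ.filter (fun j => E i j), uij i j (x i) (x j)) :
    ∃ uN uP uH : ∀ i : V, (∀ j, A j) → ℝ,
      (∀ i x, u i x = uN i x + uP i x + uH i x) ∧
      NonStrategic A uN ∧ Graphical A uN E ∧
      Normalized A uP ∧ (∃ φ, IsPotential A uP φ) ∧
        PairwiseSeparable A uP (fun i j => E i j ∨ E j i) ∧
      Normalized A uH ∧ Harmonic A uH ∧
        PairwiseSeparable A uH (fun i j => E i j ∨ E j i) := by
  refine ⟨Cor4.uNg E uij, Cor4.uPg E uij, Cor4.uHg E uij,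
    fun i x => ?_, Cor4.uNg_nonstrategic E uij hirr, Cor4.uNg_graphical E uij,
    Cor4.uPg_normalized E uij hirr, ⟨Cor4.Phi E uij, Cor4.uPg_potential E uij hirr⟩,
    ⟨Cor4.pp E uij, fun i x => rfl⟩,
    Cor4.uHg_normalized E uij hirr, Cor4.uHg_harmonic E uij hirr,
    ⟨Cor4.hh E uij, fun i x => rfl⟩⟩
  rw [hu i x]
  exact Cor4.decomp E uij i x
end

section
/- Let u be a game graphical on a directed graph E, and let ū be its normalized version, defined by ū_i(x) = u_i(x) − (1/|A_i|) · Σ_{a ∈ A_i} u_i(a, x_{-i}). Then the game u − ū is non-strategic and graphical on E. -/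
/-- If `u` is graphical on `E`, then the game `u − ū` is non-strategic and graphical
on `E`. -/
theorem sub_normalizeGame_nonStrategic_graphical {V : Type*} [Fintype V] [DecidableEq V]
    {A : V → Type*} [∀ i, Fintype (A i)] [∀ i, Nonempty (A i)]
    (u : ∀ i : V, (∀ j, A j) → ℝ) (E : V → V → Prop)
    (hirr : ∀ i, ¬ E i i) (hg : Graphical A u E) :
    NonStrategic A (fun i x => u i x - normalizeGame A u i x) ∧
      Graphical A (fun i x => u i x - normalizeGame A u i x) E := by
  constructor
  · intro i x y h
    simp only [normalizeGame, sub_sub_cancel]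
    congr 1
    refine Finset.sum_congr rfl fun a _ => ?_
    congr 1
    funext j
    by_cases hj : j = i
    · subst hj; simp
    · simp [Function.update_of_ne hj, h j hj]
  · intro i x y hxy h
    simp only [normalizeGame, sub_sub_cancel]
    congr 1
    refine Finset.sum_congr rfl fun a _ => ?_
    refine hg i _ _ (by simp) fun j hj => ?_
    have hji : j ≠ i := fun e => hirr i (e ▸ hj)
    simp [Function.update_of_ne hji, h j hj]
end

section
/- Let u be a game on a finite player set V with |V| ≥ 2, where every player's action set has at least two elements. Then there exists a game ũ strategically equivalent to u whose minimal graph is the complete graph on V, i.e., such that for every ordered pair of distinct players i ≠ j there exist strategy profiles x, y agreeing at all coordinates except possibly j with ũ_i(x) ≠ ũ_i(y). -/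
/-- If `|V| ≥ 2` and every action set has at least two elements, then every game `u`
is strategically equivalent to a game `ũ` whose minimal graph is the complete graph:
for every ordered pair `i ≠ j`, player `i`'s utility in `ũ` actually depends on
player `j`'s action. -/
theorem exists_stratEquiv_complete_minGraph {V : Type*} [Fintype V] [DecidableEq V]
    {A : V → Type*} [∀ i, Fintype (A i)] [∀ i, Nonempty (A i)]
    (hV : 2 ≤ Fintype.card V) (hA : ∀ i, 2 ≤ Fintype.card (A i))
    (u : ∀ i : V, (∀ j, A j) → ℝ) :
    ∃ utilde : ∀ i : V, (∀ j, A j) → ℝ,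
      NonStrategic A (fun i x => u i x - utilde i x) ∧
      ∀ i j : V, i ≠ j →
        ∃ x y : ∀ k, A k, (∀ k, k ≠ j → x k = y k) ∧ utilde i x ≠ utilde i y := by
  classical
  have hab : ∀ j, ∃ q : A j × A j, q.1 ≠ q.2 := by
    intro j
    obtain ⟨a, b, h⟩ := Fintype.one_lt_card_iff.mp (lt_of_lt_of_le one_lt_two (hA j))
    exact ⟨(a, b), h⟩
  choose p hp using hab
  set C : ℝ := ∑ q : V × ((∀ j, A j) × (∀ j, A j)), |u q.1 q.2.1 - u q.1 q.2.2| with hCdef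
  have hC : ∀ i (x y : ∀ j, A j), |u i x - u i y| ≤ C := by
    intro i x y
    exact Finset.single_le_sum (f := fun q : V × ((∀ j, A j) × (∀ j, A j)) =>
      |u q.1 q.2.1 - u q.1 q.2.2|) (fun q _ => abs_nonneg _)
      (Finset.mem_univ (i, (x, y)))
  have hC0 : 0 ≤ C := Finset.sum_nonneg fun q _ => abs_nonneg _
  set M : ℝ := C + 1 with hMdef
  refine ⟨fun i x => u i x + M * ∑ j ∈ Finset.univ.erase i,
      (if x j = (p j).1 then (1:ℝ) else 0), ?_, ?_⟩
  · intro i x y h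
    have hs : (∑ j ∈ Finset.univ.erase i, (if x j = (p j).1 then (1:ℝ) else 0)) =
        ∑ j ∈ Finset.univ.erase i, (if y j = (p j).1 then (1:ℝ) else 0) :=
      Finset.sum_congr rfl fun j hj => by rw [h j (Finset.mem_erase.mp hj).1]
    simp only [hs]
    ring
  · intro i j hij
    have z : ∀ k, A k := fun k => Classical.arbitrary _
    refine ⟨Function.update z j (p j).1, Function.update z j (p j).2,
      fun k hk => by simp [Function.update_of_ne hk], ?_⟩
    have hj' : j ∈ Finset.univ.erase i := Finset.mem_erase.mpr ⟨hij.symm, Finset.mem_univ j⟩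
    set x := Function.update z j (p j).1 with hx
    set y := Function.update z j (p j).2 with hy
    have hSx : (∑ k ∈ Finset.univ.erase i, (if x k = (p k).1 then (1:ℝ) else 0)) =
        1 + ∑ k ∈ (Finset.univ.erase i).erase j, (if z k = (p k).1 then (1:ℝ) else 0) := by
      rw [← Finset.add_sum_erase _ _ hj']
      congr 1
      · simp [hx]
      · exact Finset.sum_congr rfl fun k hk => by
          rw [hx, Function.update_of_ne (Finset.mem_erase.mp hk).1]
    have hSy : (∑ k ∈ Finset.univ.erase i, (if y k = (p k).1 then (1:ℝ) else 0)) =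
        0 + ∑ k ∈ (Finset.univ.erase i).erase j, (if z k = (p k).1 then (1:ℝ) else 0) := by
      rw [← Finset.add_sum_erase _ _ hj']
      congr 1
      · simp [hy, (hp j).symm]
      · exact Finset.sum_congr rfl fun k hk => by
          rw [hy, Function.update_of_ne (Finset.mem_erase.mp hk).1]
    intro hEq
    simp only at hEq
    rw [hSx, hSy] at hEq
    have h1 : u i x - u i y = -M := by linarith [hEq]
    have h2 := hC i x y
    rw [h1, abs_neg, abs_of_nonneg (by linarith : (0:ℝ) ≤ M)] at h2
    linarith
end
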